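/- Let p > 2, c > 0 and δ > 0. If u, v are real numbers with v ≥ c, u ≥ 0 and 0 < u^{p−1} − v^{p−1} < δ, then 0 < u^{p−2} − v^{p−2} ≤ ((p−2)/(p−1)) · δ/v ≤ ((p−2)/(p−1)) · δ/c. -/

import Mathlib

open MeasureTheory Set Filter Metric
open scoped Topology RealInnerProductSpace ENNReal NNReal

noncomputable section

/-- `n`-dimensional Euclidean space. -/
abbrev Euc (n : ℕ) : Type := EuclideanSpace ℝ (Fin n)

/-- A test function `φ ∈ C_0^∞(Q)` for a space-time region `Q`. -/
def IsTestOn {n : ℕ} (Q : Set (Euc n × ℝ)) (φ : Euc n × ℝ → ℝ) : Prop :=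
  ContDiff ℝ (⊤ : ℕ∞) φ ∧ HasCompactSupport φ ∧ tsupport φ ⊆ Q

/-- The spatial gradient `∇φ` of a space-time function. -/
def sgrad {n : ℕ} (φ : Euc n × ℝ → ℝ) (z : Euc n × ℝ) : Euc n :=
  gradient (fun y => φ (y, z.2)) z.1

/-- The time derivative `φ_t` of a space-time function. -/
def tderiv {n : ℕ} (φ : Euc n × ℝ → ℝ) (z : Euc n × ℝ) : ℝ :=
  deriv (fun s => φ (z.1, s)) z.2

/-- `v` belongs (locally) to `L^p(0,T;W^{1,p}(Ω))` on the space-time region `Q`,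
with weak spatial gradient `Dv`:  `|v|^p + |Dv|^p` is integrable on compact subsets of `Q`
and `Dv` is the distributional spatial gradient of `v` in `Q`. -/
def LocSobolev {n : ℕ} (p : ℝ) (Q : Set (Euc n × ℝ)) (v : Euc n × ℝ → ℝ)
    (Dv : Euc n × ℝ → Euc n) : Prop :=
  (∀ K : Set (Euc n × ℝ), K ⊆ Q → IsCompact K →
      IntegrableOn (fun z => |v z| ^ p + ‖Dv z‖ ^ p) K volume) ∧
  ∀ φ : Euc n × ℝ → ℝ, IsTestOn Q φ →
    ∫ z in Q, v z • sgrad φ z = - ∫ z in Q, φ z • Dv z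

/-- The integrand `-|v|^{p-2} v φ_t + |∇v|^{p-2} ∇v ⋅ ∇φ` of the weak formulation of
Trudinger's equation. -/
def trudingerForm {n : ℕ} (p : ℝ) (v : Euc n × ℝ → ℝ) (Dv : Euc n × ℝ → Euc n)
    (φ : Euc n × ℝ → ℝ) (z : Euc n × ℝ) : ℝ :=
  -(|v z| ^ (p - 2) * v z) * tderiv φ z + ⟪(‖Dv z‖ ^ (p - 2)) • Dv z, sgrad φ z⟫

/-- Weak supersolution of Trudinger's equation `∂_t(|v|^{p-2}v) = div(|∇v|^{p-2}∇v)` on `Q`. -/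
def IsWeakSupersolution {n : ℕ} (p : ℝ) (Q : Set (Euc n × ℝ)) (v : Euc n × ℝ → ℝ)
    (Dv : Euc n × ℝ → Euc n) : Prop :=
  LocSobolev p Q v Dv ∧
  ∀ φ : Euc n × ℝ → ℝ, IsTestOn Q φ → (∀ z, 0 ≤ φ z) →
    0 ≤ ∫ z in Q, trudingerForm p v Dv φ z

/-- Weak subsolution of Trudinger's equation on `Q`. -/
def IsWeakSubsolution {n : ℕ} (p : ℝ) (Q : Set (Euc n × ℝ)) (u : Euc n × ℝ → ℝ)
    (Du : Euc n × ℝ → Euc n) : Prop :=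
  LocSobolev p Q u Du ∧
  ∀ φ : Euc n × ℝ → ℝ, IsTestOn Q φ → (∀ z, 0 ≤ φ z) →
    ∫ z in Q, trudingerForm p u Du φ z ≤ 0

/-- Weak solution of Trudinger's equation on `Q`. -/
def IsWeakSolution {n : ℕ} (p : ℝ) (Q : Set (Euc n × ℝ)) (v : Euc n × ℝ → ℝ)
    (Dv : Euc n × ℝ → Euc n) : Prop :=
  LocSobolev p Q v Dv ∧
  ∀ φ : Euc n × ℝ → ℝ, IsTestOn Q φ →
    ∫ z in Q, trudingerForm p v Dv φ z = 0

/-- The essential infimum of `v` over `Q` is (strictly) positive. -/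
def PosEssInf {n : ℕ} (Q : Set (Euc n × ℝ)) (v : Euc n × ℝ → ℝ) : Prop :=
  ∃ c : ℝ, 0 < c ∧ ∀ᵐ z ∂(volume.restrict Q), c ≤ v z

/-- `Ω` is a bounded domain (open, connected and bounded). -/
def IsBoundedDomain {n : ℕ} (Ω : Set (Euc n)) : Prop :=
  IsOpen Ω ∧ IsConnected Ω ∧ Bornology.IsBounded Ω

/-- The initial values `g` are attained in the sense
`lim_{t→0+} ∫_Ω |v(x,t)^{p-1} - g(x)^{p-1}| dx = 0`. -/
def AttainsInitialValues {n : ℕ} (p : ℝ) (Ω : Set (Euc n)) (v : Euc n × ℝ → ℝ)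
    (g : Euc n → ℝ) : Prop :=
  Tendsto (fun t => ∫ x in Ω, |v (x, t) ^ (p - 1) - g x ^ (p - 1)|) (𝓝[>] (0 : ℝ)) (𝓝 0)

/-- Zero lateral boundary values in the classical sense on `∂Ω × I`. -/
def ZeroLateralBV {n : ℕ} (Ω : Set (Euc n)) (I : Set ℝ) (u : Euc n × ℝ → ℝ) : Prop :=
  ∀ x ∈ frontier Ω, ∀ t ∈ I, Tendsto u (𝓝[Ω ×ˢ I] ((x, t) : Euc n × ℝ)) (𝓝 0)

/-- Test functions in `C_0^∞(Ω)` for a spatial domain `Ω`. -/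
def IsSpatialTest {n : ℕ} (Ω : Set (Euc n)) (ψ : Euc n → ℝ) : Prop :=
  ContDiff ℝ (⊤ : ℕ∞) ψ ∧ HasCompactSupport ψ ∧ tsupport ψ ⊆ Ω

/-- The optimal Poincaré constant, i.e. the infimum of the Rayleigh quotient
`∫_Ω |∇u|^p / ∫_Ω |u|^p` over `W^{1,p}_0(Ω) \ {0}` (equivalently, by density, over
nonzero test functions). -/
def lambdaP {n : ℕ} (p : ℝ) (Ω : Set (Euc n)) : ℝ :=
  ⨅ ψ : {ψ : Euc n → ℝ // IsSpatialTest Ω ψ ∧ (∫ x in Ω, |ψ x| ^ p) ≠ 0},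
    (∫ x in Ω, ‖gradient ψ.1 x‖ ^ p) / ∫ x in Ω, |ψ.1 x| ^ p

/-- `u ∈ W^{1,p}_0(Ω)` with weak gradient `Du`: `u` can be approximated in the `W^{1,p}`
norm by smooth functions compactly supported in `Ω`. -/
def MemW1p0 {n : ℕ} (p : ℝ) (Ω : Set (Euc n)) (u : Euc n → ℝ) (Du : Euc n → Euc n) : Prop :=
  IntegrableOn (fun x => |u x| ^ p + ‖Du x‖ ^ p) Ω volume ∧
  ∀ ε : ℝ, 0 < ε → ∃ ψ : Euc n → ℝ, IsSpatialTest Ω ψ ∧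
    (∫ x in Ω, (|ψ x - u x| ^ p + ‖gradient ψ x - Du x‖ ^ p)) < ε

/-- `u` (with weak gradient `Du`) is an extremal of the Rayleigh quotient on `Ω`:
it belongs to `W^{1,p}_0(Ω)`, is nonzero, and attains the infimum `lambdaP p Ω`. -/
def IsExtremal {n : ℕ} (p : ℝ) (Ω : Set (Euc n)) (u : Euc n → ℝ) (Du : Euc n → Euc n) : Prop :=
  MemW1p0 p Ω u Du ∧ (∫ x in Ω, |u x| ^ p) ≠ 0 ∧
  (∫ x in Ω, ‖Du x‖ ^ p) = lambdaP p Ω * ∫ x in Ω, |u x| ^ p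

/-- Near `x`, after choosing a unit normal direction `ν`, the set `Ω` is (inside the ball
`B(x,r)`) the region above the graph of a `C^{1,α}` function `f` (with Hölder constant `C`)
defined on the hyperplane orthogonal to `ν`. -/
def IsC1AlphaGraphChart {n : ℕ} (α r C : ℝ) (Ω : Set (Euc n)) (x : Euc n) : Prop :=
  ∃ ν : Euc n, ‖ν‖ = 1 ∧
    ∃ f : ((Submodule.span ℝ {ν})ᗮ : Submodule ℝ (Euc n)) → ℝ,
      ContDiff ℝ 1 f ∧
      (∀ a b, ‖fderiv ℝ f a - fderiv ℝ f b‖ ≤ C * ‖a - b‖ ^ α) ∧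
      ∀ y ∈ Metric.ball x r,
        (y ∈ Ω ↔ f (Submodule.orthogonalProjectionOnto (Submodule.span ℝ {ν})ᗮ y) < ⟪y, ν⟫)

/-- With uniform chart parameters `r, C`: every boundary point admits a `C^{1,α}` graph chart. -/
def IsUniformC1AlphaSet {n : ℕ} (α r C : ℝ) (Ω : Set (Euc n)) : Prop :=
  ∀ x ∈ frontier Ω, IsC1AlphaGraphChart α r C Ω x

/-- `Ω ⊆ ℝⁿ` is a bounded `C^{1,α}` domain. -/
def IsC1AlphaDomain {n : ℕ} (α : ℝ) (Ω : Set (Euc n)) : Prop :=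
  IsBoundedDomain Ω ∧ ∃ r : ℝ, 0 < r ∧ ∃ C : ℝ, 0 ≤ C ∧ IsUniformC1AlphaSet α r C Ω

/-- The value of `div(|∇φ|^{p-2}∇φ)` at `z` for a (spatially `C²`) test function `φ`,
computed as the trace of the spatial derivative of the field `y ↦ |∇φ|^{p-2}∇φ`.
(When `∇φ(z) = 0` and `p > 2` this evaluates to `0`.) -/
def pLapAt {n : ℕ} (p : ℝ) (φ : Euc n × ℝ → ℝ) (z : Euc n × ℝ) : ℝ :=
  LinearMap.trace ℝ (Euc n)
    ((fderiv ℝ (fun y : Euc n =>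
        (‖gradient (fun w => φ (w, z.2)) y‖ ^ (p - 2)) • gradient (fun w => φ (w, z.2)) y)
      z.1 : Euc n →ₗ[ℝ] Euc n))

/-- `Du` is the weak (distributional) gradient of `u` on `Ω`. -/
def HasWeakGradientOn {n : ℕ} (Ω : Set (Euc n)) (u : Euc n → ℝ) (Du : Euc n → Euc n) : Prop :=
  ∀ ψ : Euc n → ℝ, IsSpatialTest Ω ψ →
    ∫ x in Ω, u x • gradient ψ x = - ∫ x in Ω, ψ x • Du x

/-!
Put `q = (p - 2)/(p - 1) ∈ [0, 1]`, `a = u^(p-1)` and `b = v^(p-1)`, so that `u^(p-2) = a^q` and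
`v^(p-2) = b^q`. Concavity of `x ↦ x^q` bounds `a^q - b^q` by the tangent at `b`, i.e. by
`q b^(q-1) (a - b)`, and `b^(q-1) = v⁻¹`.
-/

namespace Real

theorem rpow_sub_rpow_le_mul_rpow_sub_one_mul {q a b : ℝ} (hq₀ : 0 ≤ q) (hq₁ : q ≤ 1)
    (ha : 0 ≤ a) (hb : 0 < b) : a ^ q - b ^ q ≤ q * b ^ (q - 1) * (a - b) := by
  -- weighted AM-GM `a^q b^(1-q) ≤ q a + (1 - q) b`, divided by `b^(1-q)`
  have amgm := geom_mean_le_arith_mean2_weighted hq₀ (sub_nonneg.2 hq₁) ha hb.le (by ring)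
  have hbq : b ^ q * b ^ (1 - q) = b := by rw [← rpow_add hb]; simp
  have hbq' : b ^ (q - 1) * b ^ (1 - q) = 1 := by rw [← rpow_add hb]; simp
  rw [← mul_le_mul_iff_of_pos_right (rpow_pos_of_pos hb (1 - q))]
  linear_combination amgm - hbq - q * (a - b) * hbq'

theorem rpow_sub_rpow_le_of_le {r s u v : ℝ} (hr : 0 ≤ r) (hrs : r ≤ s) (hs : 0 < s)
    (hu : 0 ≤ u) (hv : 0 < v) : u ^ r - v ^ r ≤ r / s * v ^ (r - s) * (u ^ s - v ^ s) := by
  have tangent := rpow_sub_rpow_le_mul_rpow_sub_one_mul (div_nonneg hr hs.le)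
    ((div_le_one hs).2 hrs) (rpow_nonneg hu s) (rpow_pos_of_pos hv s)
  rwa [← rpow_mul hu, ← rpow_mul hv.le, ← rpow_mul hv.le, mul_div_cancel₀ r hs.ne',
    show s * (r / s - 1) = r - s by field_simp] at tangent

end Real

theorem elementary_inequality_p_gt_two_general (p c δ u v : ℝ) (hp : 2 < p) (hc : 0 < c)
    (hvc : c ≤ v) (hu : 0 ≤ u)
    (h1 : 0 < u ^ (p - 1) - v ^ (p - 1)) (h2 : u ^ (p - 1) - v ^ (p - 1) < δ) :
    0 < u ^ (p - 2) - v ^ (p - 2) ∧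
    u ^ (p - 2) - v ^ (p - 2) ≤ (p - 2) / (p - 1) * (δ / v) ∧
    (p - 2) / (p - 1) * (δ / v) ≤ (p - 2) / (p - 1) * (δ / c) := by
  have hv : 0 < v := hc.trans_le hvc
  have hq : 0 ≤ (p - 2) / (p - 1) := div_nonneg (by linarith) (by linarith)
  have hvu : v < u := (Real.rpow_lt_rpow_iff hv.le hu (by linarith)).1 (sub_pos.1 h1)
  refine ⟨sub_pos.2 (Real.rpow_lt_rpow hv.le hvu (by linarith)), ?_, ?_⟩
  · calc u ^ (p - 2) - v ^ (p - 2)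
        ≤ (p - 2) / (p - 1) * v ^ (p - 2 - (p - 1)) * (u ^ (p - 1) - v ^ (p - 1)) :=
          Real.rpow_sub_rpow_le_of_le (by linarith) (by linarith) (by linarith) hu hv
      _ = (p - 2) / (p - 1) * ((u ^ (p - 1) - v ^ (p - 1)) / v) := by
          rw [show p - 2 - (p - 1) = -1 by ring, Real.rpow_neg_one]; ring
      _ ≤ (p - 2) / (p - 1) * (δ / v) := by gcongr
  · have hδ : 0 ≤ δ := by linarith
    gcongr

/-- elementary inequality used in the comparison proof, case `p > 2`. -/
theorem elementary_inequality_p_gt_two (p c δ u v : ℝ) (hp : 2 < p) (hc : 0 < c)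
    (hδ : 0 < δ) (hvc : c ≤ v) (hu : 0 ≤ u)
    (h1 : 0 < u ^ (p - 1) - v ^ (p - 1)) (h2 : u ^ (p - 1) - v ^ (p - 1) < δ) :
    0 < u ^ (p - 2) - v ^ (p - 2) ∧
    u ^ (p - 2) - v ^ (p - 2) ≤ (p - 2) / (p - 1) * (δ / v) ∧
    (p - 2) / (p - 1) * (δ / v) ≤ (p - 2) / (p - 1) * (δ / c) :=
  elementary_inequality_p_gt_two_general p c δ u v hp hc hvc hu h1 h2

end
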